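/- arXiv:1906.00890 — 4 statements merged into one kernel-verified Lean document; each statement's English description precedes it below -/
import Mathlib

section
/- Let V, V' be finite sets of integers, let x, xᵉ : V → ℝ and x', xᵉ' : V' → ℝ, and let γ, B, H ≥ 0. Assume: (i) sqrt( Σ_{v ∈ V ∩ V'} (x'_v − xᵉ_v)² ) ≤ γ · d(x, xᵉ) (contraction of the remaining agents); (ii) d(xᵉ', xᵉ) ≤ sqrt(|V'|) · B (bounded variation of the points of interest); (iii) sqrt( Σ_{v ∈ V' \ V} (x'_v − xᵉ'_v)² ) ≤ sqrt(|V'|) · H (bounded join process). Then d(x', xᵉ') ≤ γ · d(x, xᵉ) + sqrt(|V'|) · (B + H). -/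
/-!
Split the squared distance over `V'` into the agents `V' ∩ V` that remain and the agents
`V' \ V` that join. The join bound controls the second part directly. On the first part the
triangle inequality through `xe` gives the contracted term plus the distance between `xe'` and
`xe` on `V' ∩ V`, and the open distance `d(xe', xe)` dominates the latter.
-/

open Finset

/-- The open distance between two vectors `x : V₁ → ℝ` and `y : V₂ → ℝ`
(encoded as functions `ℤ → ℝ` together with their index sets `V₁, V₂`). -/
noncomputable def openDist (V₁ V₂ : Finset ℤ) (x y : ℤ → ℝ) : ℝ :=
  Real.sqrt ((∑ v ∈ V₁ ∩ V₂, (x v - y v) ^ 2) +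
    (∑ v ∈ V₁ \ V₂, (x v) ^ 2) + (∑ v ∈ V₂ \ V₁, (y v) ^ 2))

theorem Real.sqrt_add_le_sqrt_add_sqrt {a b : ℝ} (ha : 0 ≤ a) (hb : 0 ≤ b) :
    √(a + b) ≤ √a + √b :=
  Real.sqrt_le_iff.2 ⟨by positivity, by
    rw [add_sq, Real.sq_sqrt ha, Real.sq_sqrt hb]
    nlinarith [mul_nonneg (Real.sqrt_nonneg a) (Real.sqrt_nonneg b)]⟩

namespace Finset

variable {ι : Type*} (s : Finset ι)

theorem sqrt_sum_add_sq_le (f g : ι → ℝ) :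
    √(∑ i ∈ s, (f i + g i) ^ 2) ≤ √(∑ i ∈ s, f i ^ 2) + √(∑ i ∈ s, g i ^ 2) := by
  have h := Real.Lp_add_le s f g one_le_two
  simp only [Real.rpow_two, sq_abs] at h
  simpa only [Real.sqrt_eq_rpow, one_div] using h

theorem sqrt_sum_sub_sq_le (f g h : ι → ℝ) :
    √(∑ i ∈ s, (f i - g i) ^ 2) ≤
      √(∑ i ∈ s, (f i - h i) ^ 2) + √(∑ i ∈ s, (g i - h i) ^ 2) := by
  convert s.sqrt_sum_add_sq_le (fun i => f i - h i) (fun i => h i - g i) using 4 <;> ring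

theorem sqrt_sum_sq_le_sqrt_sum_inter_add_sqrt_sum_sdiff [DecidableEq ι] (t : Finset ι)
    (f : ι → ℝ) :
    √(∑ i ∈ s, f i ^ 2) ≤ √(∑ i ∈ s ∩ t, f i ^ 2) + √(∑ i ∈ s \ t, f i ^ 2) := by
  rw [← sum_inter_add_sum_sdiff s t]
  exact Real.sqrt_add_le_sqrt_add_sqrt (sum_nonneg fun _ _ => sq_nonneg _)
    (sum_nonneg fun _ _ => sq_nonneg _)

end Finset

theorem openDist_self_eq (V : Finset ℤ) (x y : ℤ → ℝ) :
    openDist V V x y = √(∑ v ∈ V, (x v - y v) ^ 2) := by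
  simp [openDist]

theorem sqrt_sum_inter_sq_le_openDist (V₁ V₂ : Finset ℤ) (x y : ℤ → ℝ) :
    √(∑ v ∈ V₁ ∩ V₂, (x v - y v) ^ 2) ≤ openDist V₁ V₂ x y := by
  have h₁ : 0 ≤ ∑ v ∈ V₁ \ V₂, x v ^ 2 := sum_nonneg fun _ _ => sq_nonneg _
  have h₂ : 0 ≤ ∑ v ∈ V₂ \ V₁, y v ^ 2 := sum_nonneg fun _ _ => sq_nonneg _
  exact Real.sqrt_le_sqrt (by linarith)

theorem openDist_one_step_bound_general (V V' : Finset ℤ)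
    (x xe x' xe' : ℤ → ℝ) (γ B H : ℝ)
    (hcontr : Real.sqrt (∑ v ∈ V ∩ V', (x' v - xe v) ^ 2) ≤ γ * openDist V V x xe)
    (hvar : openDist V' V xe' xe ≤ Real.sqrt ((V' : Finset ℤ).card) * B)
    (hjoin : Real.sqrt (∑ v ∈ V' \ V, (x' v - xe' v) ^ 2) ≤
      Real.sqrt ((V' : Finset ℤ).card) * H) :
    openDist V' V' x' xe' ≤ γ * openDist V V x xe +
      Real.sqrt ((V' : Finset ℤ).card) * (B + H) := by
  rw [inter_comm] at hcontr
  have hremain : √(∑ v ∈ V' ∩ V, (x' v - xe' v) ^ 2) ≤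
      γ * openDist V V x xe + √(V'.card : ℝ) * B :=
    ((V' ∩ V).sqrt_sum_sub_sq_le x' xe' xe).trans <|
      add_le_add hcontr ((sqrt_sum_inter_sq_le_openDist V' V xe' xe).trans hvar)
  calc openDist V' V' x' xe'
      ≤ √(∑ v ∈ V' ∩ V, (x' v - xe' v) ^ 2) + √(∑ v ∈ V' \ V, (x' v - xe' v) ^ 2) := by
        rw [openDist_self_eq]
        exact V'.sqrt_sum_sq_le_sqrt_sum_inter_add_sqrt_sum_sdiff V (fun v => x' v - xe' v)
    _ ≤ (γ * openDist V V x xe + √(V'.card : ℝ) * B) + √(V'.card : ℝ) * H :=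
        add_le_add hremain hjoin
    _ = γ * openDist V V x xe + √(V'.card : ℝ) * (B + H) := by ring

/-- One-step estimate: contraction on remaining agents, bounded variation of the
points of interest and bounded join process imply a bound on the next distance. -/
theorem openDist_one_step_bound (V V' : Finset ℤ)
    (x xe x' xe' : ℤ → ℝ) (γ B H : ℝ)
    (hγ : 0 ≤ γ) (hB : 0 ≤ B) (hH : 0 ≤ H)
    (hcontr : Real.sqrt (∑ v ∈ V ∩ V', (x' v - xe v) ^ 2) ≤ γ * openDist V V x xe)
    (hvar : openDist V' V xe' xe ≤ Real.sqrt ((V' : Finset ℤ).card) * B)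
    (hjoin : Real.sqrt (∑ v ∈ V' \ V, (x' v - xe' v) ^ 2) ≤
      Real.sqrt ((V' : Finset ℤ).card) * H) :
    openDist V' V' x' xe' ≤ γ * openDist V V x xe +
      Real.sqrt ((V' : Finset ℤ).card) * (B + H) :=
  openDist_one_step_bound_general V V' x xe x' xe' γ B H hcontr hvar hjoin
end

section
/- (Contractivity of Proportional Dynamic Consensus.) Let G be a simple graph on a nonempty finite vertex type V with graph Laplacian L, let α ∈ (0, 1/2) and ε > 0, and assume the maximum vertex degree Δ of G satisfies Δ ≤ 1/(2ε). Let P = (1−α)I − εL. Then for all x, y : V → ℝ, ‖P x − P y‖ ≤ (1−α) · ‖x − y‖; in particular the map x ↦ P x + α u is a contraction with constant γ = 1 − α for any fixed u : V → ℝ. -/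
open Matrix Finset

/-!
Write `P z = (1 - α) z - ε L z`. Cauchy–Schwarz at each vertex gives
`(L z)ᵢ² ≤ deg i · ∑_{j ∼ i} (zᵢ - zⱼ)²`, and summing, `‖L z‖² ≤ 2Δ ⟪z, L z⟫`. With `2εΔ ≤ 1` the
quadratic term `ε² ‖L z‖²` of `‖P z‖²` is therefore at most `ε ⟪z, L z⟫`, which the cross term
`-2(1 - α) ε ⟪z, L z⟫` absorbs since `2(1 - α) ≥ 1`.
-/

namespace SimpleGraph

variable {V : Type*} [Fintype V] [DecidableEq V] (G : SimpleGraph V) [DecidableRel G.Adj]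

theorem lapMatrix_mulVec_apply_eq_sum {R : Type*} [Ring R] (x : V → R) (v : V) :
    (G.lapMatrix R *ᵥ x) v = ∑ u ∈ G.neighborFinset v, (x v - x u) := by
  rw [lapMatrix_mulVec_apply, sum_sub_distrib, sum_const, card_neighborFinset_eq_degree,
    nsmul_eq_mul]

theorem dotProduct_lapMatrix_mulVec {R : Type*} [Field R] [CharZero R] (x : V → R) :
    x ⬝ᵥ (G.lapMatrix R *ᵥ x) = (∑ v, ∑ u ∈ G.neighborFinset v, (x v - x u) ^ 2) / 2 := by
  simp only [← toLinearMap₂'_apply', lapMatrix_toLinearMap₂', neighborFinset_eq_filter,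
    sum_filter]

theorem sq_lapMatrix_mulVec_apply_le (x : V → ℝ) (v : V) :
    (G.lapMatrix ℝ *ᵥ x) v ^ 2 ≤ G.degree v * ∑ u ∈ G.neighborFinset v, (x v - x u) ^ 2 := by
  rw [lapMatrix_mulVec_apply_eq_sum, ← card_neighborFinset_eq_degree]
  exact sq_sum_le_card_mul_sum_sq

theorem lapMatrix_mulVec_dotProduct_self_le (x : V → ℝ) :
    (G.lapMatrix ℝ *ᵥ x) ⬝ᵥ (G.lapMatrix ℝ *ᵥ x) ≤
      2 * G.maxDegree * (x ⬝ᵥ (G.lapMatrix ℝ *ᵥ x)) := by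
  calc (G.lapMatrix ℝ *ᵥ x) ⬝ᵥ (G.lapMatrix ℝ *ᵥ x) = ∑ v, (G.lapMatrix ℝ *ᵥ x) v ^ 2 := by
        simp only [dotProduct, sq]
    _ ≤ ∑ v, (G.maxDegree : ℝ) * ∑ u ∈ G.neighborFinset v, (x v - x u) ^ 2 := by
        refine sum_le_sum fun v _ ↦ (G.sq_lapMatrix_mulVec_apply_le x v).trans ?_
        gcongr
        exact_mod_cast G.degree_le_maxDegree v
    _ = 2 * G.maxDegree * (x ⬝ᵥ (G.lapMatrix ℝ *ᵥ x)) := by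
        rw [dotProduct_lapMatrix_mulVec, ← mul_sum]
        ring

end SimpleGraph

theorem dotProduct_smul_sub_smul_self_le {n : Type*} [Fintype n] {x y : n → ℝ} {a ε c : ℝ}
    (hy : y ⬝ᵥ y ≤ c * (x ⬝ᵥ y)) (hxy : 0 ≤ x ⬝ᵥ y) (hε : 0 ≤ ε) (hεc : ε * c ≤ 1)
    (ha : 1 ≤ 2 * a) :
    (a • x - ε • y) ⬝ᵥ (a • x - ε • y) ≤ a ^ 2 * (x ⬝ᵥ x) := by
  have expand : (a • x - ε • y) ⬝ᵥ (a • x - ε • y) =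
      a ^ 2 * (x ⬝ᵥ x) - 2 * a * ε * (x ⬝ᵥ y) + ε ^ 2 * (y ⬝ᵥ y) := by
    simp only [sub_dotProduct, dotProduct_sub, smul_dotProduct, dotProduct_smul, smul_eq_mul,
      dotProduct_comm y x]
    ring
  have hεy : ε ^ 2 * (y ⬝ᵥ y) ≤ ε * (x ⬝ᵥ y) :=
    calc ε ^ 2 * (y ⬝ᵥ y) ≤ ε ^ 2 * (c * (x ⬝ᵥ y)) := by gcongr
      _ = (ε * c) * (ε * (x ⬝ᵥ y)) := by ring
      _ ≤ ε * (x ⬝ᵥ y) := mul_le_of_le_one_left (by positivity) hεc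
  nlinarith [mul_nonneg hε hxy]

theorem proportional_dynamic_consensus_contractive_general {V : Type*} [Fintype V] [DecidableEq V]
    (G : SimpleGraph V) [DecidableRel G.Adj]
    (α ε : ℝ) (hα : α < 1 / 2) (hε : 0 < ε)
    (hΔ : (G.maxDegree : ℝ) ≤ 1 / (2 * ε))
    (P : Matrix V V ℝ) (hP : P = (1 - α) • (1 : Matrix V V ℝ) - ε • G.lapMatrix ℝ) :
    (∀ x y : V → ℝ,
      Real.sqrt ((P *ᵥ x - P *ᵥ y) ⬝ᵥ (P *ᵥ x - P *ᵥ y)) ≤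
        (1 - α) * Real.sqrt ((x - y) ⬝ᵥ (x - y))) ∧
    (∀ u x y : V → ℝ,
      Real.sqrt (((P *ᵥ x + α • u) - (P *ᵥ y + α • u)) ⬝ᵥ
          ((P *ᵥ x + α • u) - (P *ᵥ y + α • u))) ≤
        (1 - α) * Real.sqrt ((x - y) ⬝ᵥ (x - y))) := by
  have hεΔ : ε * (2 * G.maxDegree) ≤ 1 := by
    rw [le_div_iff₀ (by positivity)] at hΔ
    linarith
  have hcontract (z : V → ℝ) :
      Real.sqrt ((P *ᵥ z) ⬝ᵥ (P *ᵥ z)) ≤ (1 - α) * Real.sqrt (z ⬝ᵥ z) := by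
    have hPz : P *ᵥ z = (1 - α) • z - ε • (G.lapMatrix ℝ *ᵥ z) := by
      rw [hP, sub_mulVec, smul_mulVec, smul_mulVec, one_mulVec]
    have hLz : 0 ≤ z ⬝ᵥ (G.lapMatrix ℝ *ᵥ z) := by
      simpa using (G.posSemidef_lapMatrix ℝ).dotProduct_mulVec_nonneg z
    calc Real.sqrt ((P *ᵥ z) ⬝ᵥ (P *ᵥ z)) ≤ Real.sqrt ((1 - α) ^ 2 * (z ⬝ᵥ z)) := by
          rw [hPz]
          exact Real.sqrt_le_sqrt <| dotProduct_smul_sub_smul_self_le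
            (G.lapMatrix_mulVec_dotProduct_self_le z) hLz hε.le hεΔ (by linarith)
      _ = (1 - α) * Real.sqrt (z ⬝ᵥ z) := by
          rw [Real.sqrt_mul (sq_nonneg _), Real.sqrt_sq (by linarith)]
  refine ⟨fun x y ↦ ?_, fun u x y ↦ ?_⟩
  · rw [← mulVec_sub]
    exact hcontract _
  · rw [add_sub_add_right_eq_sub, ← mulVec_sub]
    exact hcontract _

/-- Contractivity of Proportional Dynamic Consensus: if the maximum degree satisfies
`Δ ≤ 1/(2ε)`, then `P = (1-α)I - εL` contracts Euclidean distances by the factor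
`1 - α`; in particular `x ↦ P x + α u` is a contraction with constant `1 - α`. -/
theorem proportional_dynamic_consensus_contractive {V : Type*} [Fintype V] [DecidableEq V]
    [Nonempty V] (G : SimpleGraph V) [DecidableRel G.Adj]
    (α ε : ℝ) (hα0 : 0 < α) (hα : α < 1 / 2) (hε : 0 < ε)
    (hΔ : (G.maxDegree : ℝ) ≤ 1 / (2 * ε))
    (P : Matrix V V ℝ) (hP : P = (1 - α) • (1 : Matrix V V ℝ) - ε • G.lapMatrix ℝ) :
    (∀ x y : V → ℝ,
      Real.sqrt ((P *ᵥ x - P *ᵥ y) ⬝ᵥ (P *ᵥ x - P *ᵥ y)) ≤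
        (1 - α) * Real.sqrt ((x - y) ⬝ᵥ (x - y))) ∧
    (∀ u x y : V → ℝ,
      Real.sqrt (((P *ᵥ x + α • u) - (P *ᵥ y + α • u)) ⬝ᵥ
          ((P *ᵥ x + α • u) - (P *ᵥ y + α • u))) ≤
        (1 - α) * Real.sqrt ((x - y) ⬝ᵥ (x - y))) :=
  proportional_dynamic_consensus_contractive_general G α ε hα hε hΔ P hP
end

section
/- Let G be a simple graph on a nonempty finite vertex type V with graph Laplacian L, let α, ε > 0, and let λ₂ ≥ 0 be such that wᵀ L w ≥ λ₂ · ‖w‖² for every vector w : V → ℝ with Σ_v w_v = 0. Then for every û : V → ℝ with Σ_v û_v = 0, ‖α (αI + εL)⁻¹ û‖ ≤ (α/(α + ε λ₂)) · ‖û‖ = (1/(1 + (ε/α) λ₂)) · ‖û‖. -/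
open Matrix Finset

/-!
Write `M = αI + εL` and `x = M⁻¹ û`. Since `𝟙ᵀ L = 0`, summing `M x = û` gives `α Σ x = Σ û = 0`,
so the spectral-gap bound applies to `x`: `⟨x, û⟩ = α‖x‖² + ε xᵀLx ≥ (α + ελ₂)‖x‖²`.
Cauchy–Schwarz turns this into `(α + ελ₂)‖x‖ ≤ ‖û‖`.
-/

section DotProduct

variable {ι : Type*} [Fintype ι]

theorem dotProduct_le_sqrt_mul_sqrt (x y : ι → ℝ) :
    x ⬝ᵥ y ≤ √(x ⬝ᵥ x) * √(y ⬝ᵥ y) := by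
  simpa [dotProduct, sq] using Real.sum_mul_le_sqrt_mul_sqrt univ x y

theorem sqrt_smul_dotProduct_smul_self {c : ℝ} (hc : 0 ≤ c) (x : ι → ℝ) :
    √((c • x) ⬝ᵥ (c • x)) = c * √(x ⬝ᵥ x) := by
  rw [smul_dotProduct, dotProduct_smul, smul_eq_mul, smul_eq_mul, ← mul_assoc, ← sq,
    Real.sqrt_mul (sq_nonneg c), Real.sqrt_sq hc]

theorem mul_sqrt_dotProduct_self_le {c : ℝ} {x y : ι → ℝ} (h : c * (x ⬝ᵥ x) ≤ x ⬝ᵥ y) :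
    c * √(x ⬝ᵥ x) ≤ √(y ⬝ᵥ y) := by
  have hx : √(x ⬝ᵥ x) ^ 2 = x ⬝ᵥ x := Real.sq_sqrt (dotProduct_self_star_nonneg x)
  rcases (Real.sqrt_nonneg (x ⬝ᵥ x)).eq_or_lt with hzero | hpos
  · rw [← hzero, mul_zero]
    exact Real.sqrt_nonneg _
  · refine le_of_mul_le_mul_right ?_ hpos
    calc c * √(x ⬝ᵥ x) * √(x ⬝ᵥ x) = c * (x ⬝ᵥ x) := by rw [mul_assoc, ← sq, hx]
      _ ≤ x ⬝ᵥ y := h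
      _ ≤ √(y ⬝ᵥ y) * √(x ⬝ᵥ x) := by
        rw [mul_comm]; exact dotProduct_le_sqrt_mul_sqrt x y

theorem dotProduct_smul_one_add_smul_mulVec {R : Type*} [CommSemiring R] [DecidableEq ι]
    (a b : R) (A : Matrix ι ι R) (x : ι → R) :
    x ⬝ᵥ (a • 1 + b • A) *ᵥ x = a * (x ⬝ᵥ x) + b * (x ⬝ᵥ A *ᵥ x) := by
  rw [add_mulVec, smul_mulVec, smul_mulVec, one_mulVec, dotProduct_add, dotProduct_smul,
    dotProduct_smul, smul_eq_mul, smul_eq_mul]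

end DotProduct

namespace SimpleGraph

variable {V : Type*} [Fintype V] [DecidableEq V] (G : SimpleGraph V) [DecidableRel G.Adj]

theorem sum_lapMatrix_mulVec {R : Type*} [CommRing R] (x : V → R) :
    ∑ v, (G.lapMatrix R *ᵥ x) v = 0 := by
  have hsum : ∑ v, (G.lapMatrix R *ᵥ x) v = (fun _ ↦ 1) ⬝ᵥ G.lapMatrix R *ᵥ x := by
    simp [dotProduct]
  rw [hsum, dotProduct_mulVec, ← mulVec_transpose, (G.isSymm_lapMatrix (R := R)).eq,
    lapMatrix_mulVec_const_eq_zero, zero_dotProduct]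

theorem sum_smul_one_add_smul_lapMatrix_mulVec {R : Type*} [CommRing R] (a b : R)
    (x : V → R) : ∑ v, ((a • 1 + b • G.lapMatrix R) *ᵥ x) v = a * ∑ v, x v := by
  simp only [add_mulVec, smul_mulVec, one_mulVec, Pi.add_apply, Pi.smul_apply, smul_eq_mul,
    sum_add_distrib, ← mul_sum, sum_lapMatrix_mulVec, mul_zero, add_zero]

theorem posDef_smul_one_add_smul_lapMatrix {a b : ℝ} (ha : 0 < a) (hb : 0 ≤ b) :
    (a • 1 + b • G.lapMatrix ℝ).PosDef :=
  (PosDef.one.smul ha).add_posSemidef ((posSemidef_lapMatrix ℝ G).smul hb)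

end SimpleGraph

theorem proportional_dynamic_consensus_disagreement_contraction_general {V : Type*} [Fintype V]
    [DecidableEq V] (G : SimpleGraph V) [DecidableRel G.Adj]
    (α ε lam2 : ℝ) (hα : 0 < α) (hε : 0 < ε) (hlam2 : 0 ≤ lam2)
    (hconn : ∀ w : V → ℝ, (∑ v, w v) = 0 →
      w ⬝ᵥ (G.lapMatrix ℝ) *ᵥ w ≥ lam2 * (w ⬝ᵥ w)) :
    ∀ uhat : V → ℝ, (∑ v, uhat v) = 0 →
      Real.sqrt ((α • ((α • (1 : Matrix V V ℝ) + ε • G.lapMatrix ℝ)⁻¹ *ᵥ uhat)) ⬝ᵥ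
          (α • ((α • (1 : Matrix V V ℝ) + ε • G.lapMatrix ℝ)⁻¹ *ᵥ uhat))) ≤
        α / (α + ε * lam2) * Real.sqrt (uhat ⬝ᵥ uhat) ∧
      α / (α + ε * lam2) = 1 / (1 + (ε / α) * lam2) := by
  intro uhat huhat
  set M := α • (1 : Matrix V V ℝ) + ε • G.lapMatrix ℝ
  set x := M⁻¹ *ᵥ uhat
  have hpos : 0 < α + ε * lam2 := by positivity
  have hMx : M *ᵥ x = uhat := by
    rw [mulVec_mulVec, mul_nonsing_inv _ ((isUnit_iff_isUnit_det M).1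
      (G.posDef_smul_one_add_smul_lapMatrix hα hε.le).isUnit), one_mulVec]
  have hx : ∑ v, x v = 0 := by
    have h := G.sum_smul_one_add_smul_lapMatrix_mulVec α ε x
    rw [hMx, huhat] at h
    exact (mul_eq_zero.1 h.symm).resolve_left hα.ne'
  have hcoercive : (α + ε * lam2) * (x ⬝ᵥ x) ≤ x ⬝ᵥ uhat := by
    rw [← hMx, dotProduct_smul_one_add_smul_mulVec]
    linarith [mul_le_mul_of_nonneg_left (hconn x hx) hε.le]
  have hbound := mul_sqrt_dotProduct_self_le hcoercive
  refine ⟨?_, by field_simp⟩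
  rw [sqrt_smul_dotProduct_smul_self hα.le, div_mul_eq_mul_div, le_div_iff₀ hpos]
  linarith [mul_le_mul_of_nonneg_left hbound hα.le]

/-- On vectors with zero sum (orthogonal to the all-ones vector), the map
`α (αI + εL)⁻¹` contracts the Euclidean norm by the factor
`α/(α + ελ₂) = 1/(1 + (ε/α)λ₂)`, where `λ₂` is a lower bound on the Laplacian
quadratic form over zero-sum vectors (the algebraic connectivity). -/
theorem proportional_dynamic_consensus_disagreement_contraction {V : Type*} [Fintype V]
    [DecidableEq V] [Nonempty V] (G : SimpleGraph V) [DecidableRel G.Adj]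
    (α ε lam2 : ℝ) (hα : 0 < α) (hε : 0 < ε) (hlam2 : 0 ≤ lam2)
    (hconn : ∀ w : V → ℝ, (∑ v, w v) = 0 →
      w ⬝ᵥ (G.lapMatrix ℝ) *ᵥ w ≥ lam2 * (w ⬝ᵥ w)) :
    ∀ uhat : V → ℝ, (∑ v, uhat v) = 0 →
      Real.sqrt ((α • ((α • (1 : Matrix V V ℝ) + ε • G.lapMatrix ℝ)⁻¹ *ᵥ uhat)) ⬝ᵥ
          (α • ((α • (1 : Matrix V V ℝ) + ε • G.lapMatrix ℝ)⁻¹ *ᵥ uhat))) ≤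
        α / (α + ε * lam2) * Real.sqrt (uhat ⬝ᵥ uhat) ∧
      α / (α + ε * lam2) = 1 / (1 + (ε / α) * lam2) :=
  proportional_dynamic_consensus_disagreement_contraction_general G α ε lam2 hα hε hlam2 hconn
end

section
/- (Stability of Open Proportional Dynamic Consensus.) Let ε > 0, α ∈ (0, 1/2) and β > 1 − α. Let {V_k}_{k≥0} be a sequence of nonempty finite sets of integers with |V_{k+1}| ≥ β² · |V_k| for all k, let G_k be a simple graph on V_k with maximum degree at most 1/(2ε) and graph Laplacian L_k, and let u_k : V_k → ℝ be inputs. Let λ̄² ≥ 0 satisfy wᵀ L_k w ≥ λ̄² ‖w‖² for all k and all w : V_k → ℝ with Σ_v w_v = 0. Let ū_k denote the constant vector of the average of u_k over V_k and û_k = u_k − ū_k, and assume ‖û_k‖_∞ ≤ Π for all k and d(ū_{k+1}, ū_k) ≤ sqrt(|V_{k+1}|) · U for all k. Define the state sequence x_k : V_k → ℝ by: x_{k+1,v} = x_{k,v} − α(x_{k,v} − u_{k,v}) − ε Σ_{w adjacent to v in G_k} (x_{k,v} − x_{k,w}) for v ∈ V_k ∩ V_{k+1}, and x_{k+1,v}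 = u_{k+1,v} for v ∈ V_{k+1} \ V_k. Let xᵉ_k = (αI + εL_k)⁻¹ (α u_k). Then the trajectory of points of interest {xᵉ_k} is open stable with stability radius R = ( (1 + 2/(1 + (ε/α)λ̄²) + (1/β)·(1/(1 + (ε/α)λ̄²))) Π + U ) / ( 1 − (1−α)/β ): for every ε' > R there exists δ > 0 such that if d(x_0, xᵉ_0)/sqrt(|V_0|) < δ then d(x_k, xᵉ_k)/sqrt(|V_k|) < ε' for every k ≥ 0. -/
open Finset

/-!
Write `e_k = x_k - xᵉ_k`. On the remaining agents `x_{k+1} - xᵉ_k = ((1-α)I - εL_k) e_k`, and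
the degree bound gives `‖L_k f‖² ≤ (1/ε) ⟨f, L_k f⟩`, which makes `(1-α)I - εL_k` a
`(1-α)`-contraction. Testing `(αI + εL_k)(xᵉ_k - ū_k) = α û_k` against `xᵉ_k - ū_k`, which sums
to zero, gives `‖xᵉ_k - ū_k‖ ≤ ‖û_k‖ / (1 + (ε/α)λ̄²) ≤ √|V_k| Π / (1 + (ε/α)λ̄²)`. Routing
`e_{k+1}` through `xᵉ_k`, `ū_k`, `ū_{k+1}` (and through `u_{k+1}` for arriving agents) and
dividing by `√|V_{k+1}| ≥ β √|V_k|` yields `r_{k+1} ≤ ((1-α)/β) r_k + C` for the normalized error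
`r_k`, where `C / (1 - (1-α)/β)` is below the stated radius; so `r_k < ε'` persists once
`r_0 < ε'`.
-/

section L2

variable {ι : Type*}

noncomputable def l2Norm (s : Finset ι) (f : ι → ℝ) : ℝ := √(∑ i ∈ s, f i ^ 2)

lemma l2Norm_nonneg (s : Finset ι) (f : ι → ℝ) : 0 ≤ l2Norm s f := Real.sqrt_nonneg _

lemma l2Norm_congr {s : Finset ι} {f g : ι → ℝ} (h : ∀ i ∈ s, f i = g i) :
    l2Norm s f = l2Norm s g := by
  unfold l2Norm
  rw [sum_congr rfl fun i hi => by rw [h i hi]]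

lemma l2Norm_neg (s : Finset ι) (f : ι → ℝ) : l2Norm s (-f) = l2Norm s f := by
  simp [l2Norm]

lemma l2Norm_add_le (s : Finset ι) (f g : ι → ℝ) :
    l2Norm s (f + g) ≤ l2Norm s f + l2Norm s g := by
  simpa [l2Norm, EuclideanSpace.norm_eq, sum_attach s fun i => f i ^ 2,
    sum_attach s fun i => g i ^ 2, sum_attach s fun i => (f i + g i) ^ 2]
    using norm_add_le (WithLp.toLp 2 fun i : s => f i) (WithLp.toLp 2 fun i : s => g i)

lemma l2Norm_sub_le (s : Finset ι) (f g : ι → ℝ) :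
    l2Norm s (f - g) ≤ l2Norm s f + l2Norm s g := by
  simpa [sub_eq_add_neg, l2Norm_neg] using l2Norm_add_le s f (-g)

lemma l2Norm_mono {s t : Finset ι} (hst : s ⊆ t) (f : ι → ℝ) : l2Norm s f ≤ l2Norm t f :=
  Real.sqrt_le_sqrt (sum_le_sum_of_subset_of_nonneg hst fun _ _ _ => sq_nonneg _)

lemma l2Norm_indicator [DecidableEq ι] (s t : Finset ι) (f : ι → ℝ) :
    l2Norm t ((s : Set ι).indicator f) = l2Norm (t ∩ s) f := by
  simp only [l2Norm, Set.indicator_apply, mem_coe, ite_pow, ne_eq, OfNat.ofNat_ne_zero,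
    not_false_eq_true, zero_pow, sum_ite_mem]

lemma l2Norm_le_sqrt_card_mul {s : Finset ι} {f : ι → ℝ} {c : ℝ}
    (h : ∀ i ∈ s, |f i| ≤ c) : l2Norm s f ≤ √(#s : ℝ) * c := by
  rcases s.eq_empty_or_nonempty with rfl | ⟨i, hi⟩
  · simp [l2Norm]
  have hc : 0 ≤ c := (abs_nonneg _).trans (h i hi)
  calc l2Norm s f ≤ √(∑ _i ∈ s, c ^ 2) :=
        Real.sqrt_le_sqrt (sum_le_sum fun i hi => sq_le_sq' (neg_le_of_abs_le (h i hi))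
          (le_of_abs_le (h i hi)))
    _ = √(#s : ℝ) * c := by
        rw [sum_const, nsmul_eq_mul, Real.sqrt_mul (Nat.cast_nonneg _), Real.sqrt_sq hc]

lemma inner_le_l2Norm_mul_l2Norm (s : Finset ι) (f g : ι → ℝ) :
    ∑ i ∈ s, f i * g i ≤ l2Norm s f * l2Norm s g :=
  Real.sum_mul_le_sqrt_mul_sqrt s f g

end L2

lemma openDist_self (s : Finset ℤ) (x y : ℤ → ℝ) : openDist s s x y = l2Norm s (x - y) := by
  simp [openDist, l2Norm]

lemma l2Norm_inter_le_openDist (s t : Finset ℤ) (x y : ℤ → ℝ) :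
    l2Norm (s ∩ t) (fun v => x v - y v) ≤ openDist s t x y := by
  refine Real.sqrt_le_sqrt ?_
  have h₁ : 0 ≤ ∑ v ∈ s \ t, x v ^ 2 := sum_nonneg fun _ _ => sq_nonneg _
  have h₂ : 0 ≤ ∑ v ∈ t \ s, y v ^ 2 := sum_nonneg fun _ _ => sq_nonneg _
  linarith

section Laplacian

variable {ι : Type*} {V : Finset ι} {N : ι → Finset ι}

def laplacian (N : ι → Finset ι) (f : ι → ℝ) (v : ι) : ℝ := ∑ z ∈ N v, (f v - f z)

lemma laplacian_sub (N : ι → Finset ι) (f g : ι → ℝ) (v : ι) :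
    laplacian N (f - g) v = laplacian N f v - laplacian N g v := by
  simp only [laplacian, Pi.sub_apply, ← sum_sub_distrib]
  exact sum_congr rfl fun _ _ => by ring

lemma laplacian_sub_const (N : ι → Finset ι) (f : ι → ℝ) (c : ℝ) (v : ι) :
    laplacian N (fun i => f i - c) v = laplacian N f v :=
  sum_congr rfl fun _ _ => by ring

variable (hsub : ∀ v, N v ⊆ V) (hsymm : ∀ v w, w ∈ N v ↔ v ∈ N w)
include hsub hsymm

lemma sum_sum_neighbors_comm {M : Type*} [AddCommMonoid M] (g : ι → ι → M) :
    ∑ v ∈ V, ∑ z ∈ N v, g v z = ∑ v ∈ V, ∑ z ∈ N v, g z v :=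
  sum_comm' fun v z => ⟨fun ⟨_, hz⟩ => ⟨(hsymm v z).1 hz, hsub v hz⟩,
    fun ⟨hv, _⟩ => ⟨hsub z hv, (hsymm z v).1 hv⟩⟩

lemma sum_laplacian_eq_zero (f : ι → ℝ) : ∑ v ∈ V, laplacian N f v = 0 := by
  have hswap := sum_sum_neighbors_comm hsub hsymm fun v z => f v - f z
  have hneg : ∑ v ∈ V, ∑ z ∈ N v, (f z - f v) = -∑ v ∈ V, ∑ z ∈ N v, (f v - f z) := by
    simp only [← sum_neg_distrib, neg_sub]
  simp only [laplacian]
  linarith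

lemma two_mul_sum_mul_laplacian (f : ι → ℝ) :
    2 * ∑ v ∈ V, f v * laplacian N f v = ∑ v ∈ V, ∑ z ∈ N v, (f v - f z) ^ 2 := by
  have hswap := sum_sum_neighbors_comm hsub hsymm fun v z => f v * (f v - f z)
  have hswap' : ∑ v ∈ V, f v * laplacian N f v = ∑ v ∈ V, ∑ z ∈ N v, f z * (f z - f v) := by
    rw [← hswap]
    simp only [laplacian, mul_sum]
  rw [two_mul]
  nth_rewrite 2 [hswap']
  simp only [laplacian, mul_sum, ← sum_add_distrib]
  exact sum_congr rfl fun v _ => sum_congr rfl fun z _ => by ring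

lemma sum_mul_laplacian_nonneg (f : ι → ℝ) : 0 ≤ ∑ v ∈ V, f v * laplacian N f v := by
  have hsq : 0 ≤ ∑ v ∈ V, ∑ z ∈ N v, (f v - f z) ^ 2 :=
    sum_nonneg fun _ _ => sum_nonneg fun _ _ => sq_nonneg _
  linarith [two_mul_sum_mul_laplacian hsub hsymm f]

lemma sum_sq_laplacian_le {D : ℝ} (hdeg : ∀ v ∈ V, (#(N v) : ℝ) ≤ D) (f : ι → ℝ) :
    ∑ v ∈ V, laplacian N f v ^ 2 ≤ 2 * D * ∑ v ∈ V, f v * laplacian N f v := by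
  calc ∑ v ∈ V, laplacian N f v ^ 2
      ≤ ∑ v ∈ V, (#(N v) : ℝ) * ∑ z ∈ N v, (f v - f z) ^ 2 :=
        sum_le_sum fun v _ => sq_sum_le_card_mul_sum_sq
    _ ≤ ∑ v ∈ V, D * ∑ z ∈ N v, (f v - f z) ^ 2 :=
        sum_le_sum fun v hv => mul_le_mul_of_nonneg_right (hdeg v hv)
          (sum_nonneg fun _ _ => sq_nonneg _)
    _ = 2 * D * ∑ v ∈ V, f v * laplacian N f v := by
        rw [← mul_sum, mul_comm 2 D, mul_assoc, two_mul_sum_mul_laplacian hsub hsymm]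

lemma l2Norm_one_sub_mul_sub_laplacian_le {α ε D : ℝ} (hα : α ≤ 1) (hε : 0 ≤ ε)
    (hdeg : ∀ v ∈ V, (#(N v) : ℝ) ≤ D) (hεD : ε * D ≤ 1 - α) (f : ι → ℝ) :
    l2Norm V (fun v => (1 - α) * f v - ε * laplacian N f v) ≤ (1 - α) * l2Norm V f := by
  have hq := sum_mul_laplacian_nonneg hsub hsymm f
  have hL := sum_sq_laplacian_le hsub hsymm hdeg f
  have hexpand : ∑ v ∈ V, ((1 - α) * f v - ε * laplacian N f v) ^ 2 =
      (1 - α) ^ 2 * ∑ v ∈ V, f v ^ 2 - 2 * (1 - α) * ε * ∑ v ∈ V, f v * laplacian N f v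
        + ε ^ 2 * ∑ v ∈ V, laplacian N f v ^ 2 := by
    simp only [mul_sum, ← sum_sub_distrib, ← sum_add_distrib]
    exact sum_congr rfl fun _ _ => by ring
  have hsq : ∑ v ∈ V, ((1 - α) * f v - ε * laplacian N f v) ^ 2 ≤
      (1 - α) ^ 2 * ∑ v ∈ V, f v ^ 2 := by
    rw [hexpand]
    nlinarith [mul_le_mul_of_nonneg_left hL (sq_nonneg ε),
      mul_le_mul_of_nonneg_right hεD (mul_nonneg hε hq)]
  calc l2Norm V (fun v => (1 - α) * f v - ε * laplacian N f v)
      ≤ √((1 - α) ^ 2 * ∑ v ∈ V, f v ^ 2) := Real.sqrt_le_sqrt hsq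
    _ = (1 - α) * l2Norm V f := by
        rw [Real.sqrt_mul (sq_nonneg _), Real.sqrt_sq (by linarith), l2Norm]

end Laplacian

section Equilibrium

variable {ι : Type*} {V : Finset ι} {N : ι → Finset ι} {α ε : ℝ} {u xe : ι → ℝ}
  (hsub : ∀ v, N v ⊆ V) (hsymm : ∀ v w, w ∈ N v ↔ v ∈ N w)
  (hxe : ∀ v ∈ V, α * xe v + ε * laplacian N xe v = α * u v)
include hsub hsymm hxe

lemma sum_eq_sum_of_equilibrium (hα : α ≠ 0) :
    ∑ v ∈ V, xe v = ∑ v ∈ V, u v := by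
  have hsum : α * ∑ v ∈ V, xe v + ε * ∑ v ∈ V, laplacian N xe v = α * ∑ v ∈ V, u v := by
    simp only [mul_sum, ← sum_add_distrib]
    exact sum_congr rfl hxe
  rw [sum_laplacian_eq_zero hsub hsymm, mul_zero, add_zero] at hsum
  exact mul_left_cancel₀ hα hsum

lemma l2Norm_equilibrium_sub_average_le {lam2 : ℝ} (hα : 0 < α) (hε : 0 ≤ ε) (hlam2 : 0 ≤ lam2)
    (hconn : ∀ w : ι → ℝ, ∑ v ∈ V, w v = 0 →
      ∑ v ∈ V, w v * laplacian N w v ≥ lam2 * ∑ v ∈ V, w v ^ 2) :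
    l2Norm V (fun v => xe v - (∑ z ∈ V, u z) / #V) ≤
      1 / (1 + ε / α * lam2) * l2Norm V (fun v => u v - (∑ z ∈ V, u z) / #V) := by
  set ubar := (∑ z ∈ V, u z) / #V
  set w : ι → ℝ := fun v => xe v - ubar
  set b : ι → ℝ := fun v => u v - ubar
  have hw0 : ∑ v ∈ V, w v = 0 := by
    rcases V.eq_empty_or_nonempty with rfl | hV
    · simp
    simp only [w, ubar, sum_sub_distrib, sum_const, nsmul_eq_mul,
      sum_eq_sum_of_equilibrium hsub hsymm hxe hα.ne']
    field_simp
    ring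
  have hinner : α * ∑ v ∈ V, w v ^ 2 + ε * ∑ v ∈ V, w v * laplacian N w v =
      α * ∑ v ∈ V, b v * w v := by
    simp only [mul_sum, ← sum_add_distrib]
    refine sum_congr rfl fun v hv => ?_
    rw [laplacian_sub_const]
    linear_combination w v * hxe v hv
  have hsq : l2Norm V w ^ 2 = ∑ v ∈ V, w v ^ 2 :=
    Real.sq_sqrt (sum_nonneg fun _ _ => sq_nonneg _)
  have henergy : (α + ε * lam2) * l2Norm V w ^ 2 ≤ α * l2Norm V b * l2Norm V w :=
    calc (α + ε * lam2) * l2Norm V w ^ 2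
        = α * l2Norm V w ^ 2 + ε * (lam2 * l2Norm V w ^ 2) := by ring
      _ ≤ α * l2Norm V w ^ 2 + ε * ∑ v ∈ V, w v * laplacian N w v := by
        rw [hsq]
        gcongr
        exact hconn w hw0
      _ = α * ∑ v ∈ V, b v * w v := by rw [hsq, hinner]
      _ ≤ α * l2Norm V b * l2Norm V w := by
        rw [mul_assoc]
        gcongr
        exact inner_le_l2Norm_mul_l2Norm V b w
  have hkey : (α + ε * lam2) * l2Norm V w ≤ α * l2Norm V b := by
    rcases (l2Norm_nonneg V w).eq_or_lt with h0 | hpos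
    · rw [← h0, mul_zero]
      exact mul_nonneg hα.le (l2Norm_nonneg V b)
    · exact le_of_mul_le_mul_right (by rwa [mul_assoc, ← sq]) hpos
  have hc : 0 < α + ε * lam2 := by positivity
  rw [show 1 / (1 + ε / α * lam2) * l2Norm V b = α * l2Norm V b / (α + ε * lam2) by
    field_simp, le_div_iff₀ hc, mul_comm]
  exact hkey

end Equilibrium

lemma l2Norm_open_step_error_le {ι : Type*} [DecidableEq ι] {V V' : Finset ι}
    {N : ι → Finset ι} (hsub : ∀ v, N v ⊆ V) (hsymm : ∀ v w, w ∈ N v ↔ v ∈ N w)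
    {α ε D : ℝ} (hα : α ≤ 1) (hε : 0 ≤ ε) (hdeg : ∀ v ∈ V, (#(N v) : ℝ) ≤ D)
    (hεD : ε * D ≤ 1 - α) {u u' x x' xe xe' : ι → ℝ} (c c' : ℝ)
    (hx_rem : ∀ v ∈ V ∩ V', x' v = x v - α * (x v - u v) - ε * laplacian N x v)
    (hx_arr : ∀ v ∈ V' \ V, x' v = u' v)
    (hxe : ∀ v ∈ V, α * xe v + ε * laplacian N xe v = α * u v) :
    l2Norm V' (x' - xe') ≤ (1 - α) * l2Norm V (x - xe) + l2Norm V (fun v => xe v - c)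
      + l2Norm (V' ∩ V) (fun _ => c' - c) + l2Norm V' (fun v => xe' v - c')
      + l2Norm V' (fun v => u' v - c') := by
  set A := (V : Set ι).indicator fun v => (1 - α) * (x - xe) v - ε * laplacian N (x - xe) v
  set B := (V : Set ι).indicator fun v => xe v - c
  set C := (V : Set ι).indicator fun _ => c' - c
  set W := fun v => xe' v - c'
  set R := ((V' \ V : Finset ι) : Set ι).indicator fun v => u' v - c'
  have hdecomp : l2Norm V' (x' - xe') = l2Norm V' (A + B - C - W + R) := by
    refine l2Norm_congr fun v hv => ?_
    by_cases hvV : v ∈ V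
    · have hR : v ∉ V' \ V := fun h => (mem_sdiff.1 h).2 hvV
      simp only [A, B, C, W, R, Pi.add_apply, Pi.sub_apply,
        Set.indicator_of_mem (mem_coe.2 hvV), Set.indicator_of_notMem (mt mem_coe.1 hR),
        laplacian_sub, hx_rem v (mem_inter.2 ⟨hvV, hv⟩)]
      linear_combination -hxe v hvV
    · have hR : v ∈ V' \ V := mem_sdiff.2 ⟨hv, hvV⟩
      simp only [A, B, C, W, R, Pi.add_apply, Pi.sub_apply,
        Set.indicator_of_notMem (mt mem_coe.1 hvV), Set.indicator_of_mem (mem_coe.2 hR),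
        hx_arr v hR]
      ring
  have hA : l2Norm V' A ≤ (1 - α) * l2Norm V (x - xe) := by
    rw [l2Norm_indicator]
    exact (l2Norm_mono inter_subset_right _).trans
      (l2Norm_one_sub_mul_sub_laplacian_le hsub hsymm hα hε hdeg hεD _)
  have hB : l2Norm V' B ≤ l2Norm V (fun v => xe v - c) := by
    rw [l2Norm_indicator]
    exact l2Norm_mono inter_subset_right _
  have hC : l2Norm V' C = l2Norm (V' ∩ V) (fun _ => c' - c) := l2Norm_indicator _ _ _
  have hR : l2Norm V' R ≤ l2Norm V' (fun v => u' v - c') := by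
    rw [l2Norm_indicator]
    exact l2Norm_mono inter_subset_left _
  rw [hdecomp]
  linarith [l2Norm_add_le V' (A + B - C - W) R, l2Norm_sub_le V' (A + B - C) W,
    l2Norm_sub_le V' (A + B) C, l2Norm_add_le V' A B]

lemma div_sqrt_le_of_le_mul_add {E E' n n' a b β C : ℝ} (hβ : 0 < β) (hn : 0 < n)
    (hnn : n' ≥ β ^ 2 * n) (ha : 0 ≤ a) (hb : 0 ≤ b) (hE : 0 ≤ E)
    (h : E' ≤ a * E + b * √n + √n' * C) : E' / √n' ≤ a / β * (E / √n) + (b / β + C) := by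
  have hs : 0 < √n := Real.sqrt_pos.2 hn
  have hss : β * √n ≤ √n' := by
    simpa [Real.sqrt_mul (sq_nonneg β), Real.sqrt_sq hβ.le] using Real.sqrt_le_sqrt hnn
  have hs' : 0 < √n' := (mul_pos hβ hs).trans_le hss
  have hcoef : 0 ≤ a / β * (E / √n) + b / β := by positivity
  have hkey : a * E + b * √n = (a / β * (E / √n) + b / β) * (β * √n) := by field_simp
  rw [div_le_iff₀ hs']
  nlinarith [mul_le_mul_of_nonneg_left hss hcoef]

lemma exists_pos_forall_lt_of_le_mul_add {r : ℕ → ℝ} {ρ C M : ℝ} (hρ0 : 0 ≤ ρ) (hρ1 : ρ < 1)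
    (hC : 0 ≤ C) (hstep : ∀ k, r (k + 1) ≤ ρ * r k + C) (hM : C / (1 - ρ) < M) :
    ∃ δ > 0, r 0 < δ → ∀ k, r k < M := by
  have h1ρ : 0 < 1 - ρ := sub_pos.2 hρ1
  have hCM : C < (1 - ρ) * M := by rwa [div_lt_iff₀ h1ρ, mul_comm] at hM
  refine ⟨M, (div_nonneg hC h1ρ.le).trans_lt hM, fun h0 k => ?_⟩
  induction k with
  | zero => exact h0
  | succ k ih => nlinarith [hstep k, mul_le_mul_of_nonneg_left ih.le hρ0]

theorem open_proportional_dynamic_consensus_stability_general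
    (ε α β : ℝ) (hε : 0 < ε) (hα0 : 0 < α) (hα : α < 1 / 2) (hβ : β > 1 - α)
    (V : ℕ → Finset ℤ) (hVne : ∀ k, (V k).Nonempty)
    (hVcard : ∀ k, ((V (k + 1)).card : ℝ) ≥ β ^ 2 * ((V k).card : ℝ))
    (N : ℕ → ℤ → Finset ℤ)
    (hNsub : ∀ k v, N k v ⊆ V k)
    (hNsymm : ∀ k v w, w ∈ N k v ↔ v ∈ N k w)
    (hdeg : ∀ k, ∀ v ∈ V k, ((N k v).card : ℝ) ≤ 1 / (2 * ε))
    (u : ℕ → ℤ → ℝ) (lam2 : ℝ) (hlam2 : 0 ≤ lam2)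
    (hconn : ∀ k, ∀ w : ℤ → ℝ, (∑ v ∈ V k, w v) = 0 →
      (∑ v ∈ V k, w v * (∑ z ∈ N k v, (w v - w z))) ≥ lam2 * ∑ v ∈ V k, (w v) ^ 2)
    (Pi' U : ℝ)
    (hPi : ∀ k, ∀ v ∈ V k, |u k v - (∑ z ∈ V k, u k z) / ((V k).card : ℝ)| ≤ Pi')
    (hU : ∀ k, openDist (V (k + 1)) (V k)
        (fun _ => (∑ z ∈ V (k + 1), u (k + 1) z) / ((V (k + 1)).card : ℝ))
        (fun _ => (∑ z ∈ V k, u k z) / ((V k).card : ℝ)) ≤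
      Real.sqrt ((V (k + 1)).card) * U)
    (x xe : ℕ → ℤ → ℝ)
    (hx_rem : ∀ k, ∀ v ∈ V k ∩ V (k + 1),
      x (k + 1) v =
        x k v - α * (x k v - u k v) - ε * ∑ w ∈ N k v, (x k v - x k w))
    (hx_arr : ∀ k, ∀ v ∈ V (k + 1) \ V k, x (k + 1) v = u (k + 1) v)
    (hxe : ∀ k, ∀ v ∈ V k,
      α * xe k v + ε * (∑ w ∈ N k v, (xe k v - xe k w)) = α * u k v) :
    ∀ ε' > ((1 + 2 / (1 + (ε / α) * lam2) + (1 / β) * (1 / (1 + (ε / α) * lam2))) * Pi'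
          + U) / (1 - (1 - α) / β),
      ∃ δ > 0, openDist (V 0) (V 0) (x 0) (xe 0) / Real.sqrt ((V 0).card) < δ →
        ∀ k, openDist (V k) (V k) (x k) (xe k) / Real.sqrt ((V k).card) < ε' := by
  intro ε' hε'
  have hβ0 : 0 < β := by linarith
  have hcard : ∀ k, (0 : ℝ) < #(V k) := fun k => Nat.cast_pos.2 (hVne k).card_pos
  have hPi0 : 0 ≤ Pi' := (abs_nonneg _).trans (hPi 0 _ (hVne 0).choose_spec)
  have hU0 : 0 ≤ U :=
    nonneg_of_mul_nonneg_right ((Real.sqrt_nonneg _).trans (hU 0)) (Real.sqrt_pos.2 (hcard 1))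
  have hc₁ : 0 ≤ 1 / (1 + ε / α * lam2) := by positivity
  have htrack : ∀ k, l2Norm (V k) (fun v => xe k v - (∑ z ∈ V k, u k z) / #(V k)) ≤
      1 / (1 + ε / α * lam2) * (√(#(V k) : ℝ) * Pi') := fun k =>
    (l2Norm_equilibrium_sub_average_le (hNsub k) (hNsymm k) (hxe k) hα0 hε.le hlam2
      (hconn k)).trans (mul_le_mul_of_nonneg_left (l2Norm_le_sqrt_card_mul (hPi k)) hc₁)
  have hεD : ε * (1 / (2 * ε)) ≤ 1 - α := by field_simp; linarith
  have hstep : ∀ k, openDist (V (k + 1)) (V (k + 1)) (x (k + 1)) (xe (k + 1)) /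
      √(#(V (k + 1)) : ℝ) ≤ (1 - α) / β * (openDist (V k) (V k) (x k) (xe k) / √(#(V k) : ℝ))
        + ((1 + 2 / (1 + ε / α * lam2) + 1 / β * (1 / (1 + ε / α * lam2))) * Pi' + U) := by
    intro k
    rw [openDist_self, openDist_self]
    refine (div_sqrt_le_of_le_mul_add hβ0 (hcard k) (hVcard k)
      (by linarith : (0 : ℝ) ≤ 1 - α) (mul_nonneg hc₁ hPi0) (l2Norm_nonneg _ _)
      (C := U + 1 / (1 + ε / α * lam2) * Pi' + Pi') ?_).trans (add_le_add_right ?_ _)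
    · linarith [l2Norm_open_step_error_le (hNsub k) (hNsymm k) (by linarith) hε.le (hdeg k) hεD
        (xe' := xe (k + 1)) ((∑ z ∈ V k, u k z) / #(V k))
        ((∑ z ∈ V (k + 1), u (k + 1) z) / #(V (k + 1))) (hx_rem k) (hx_arr k) (hxe k),
        htrack k, htrack (k + 1), (l2Norm_inter_le_openDist _ _ _ _).trans (hU k),
        l2Norm_le_sqrt_card_mul (hPi (k + 1))]
    · have hc₁Pi := mul_nonneg hc₁ hPi0
      ring_nf at hc₁Pi ⊢
      linarith
  exact exists_pos_forall_lt_of_le_mul_add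
    (r := fun k => openDist (V k) (V k) (x k) (xe k) / √(#(V k) : ℝ))
    (div_nonneg (by linarith) hβ0.le) ((div_lt_one hβ0).2 (by linarith))
    (add_nonneg (mul_nonneg (by positivity) hPi0) hU0) hstep hε'

/-- Stability of Open Proportional Dynamic Consensus.  The time-varying graph `G_k`
on the agent set `V k` is described by neighborhoods `N k v` (symmetric, irreflexive,
contained in `V k`, with degree at most `1/(2ε)`); `λ̄²` is a uniform lower bound on
the Laplacian quadratic form over zero-sum vectors (algebraic connectivity); the
input disagreement is bounded by `Π` and the variation of the average input by `U`.
Remaining agents apply the proportional dynamic consensus update, arriving agents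
initialize to their input, and `xᵉ_k` solves `(αI + εL_k) xᵉ_k = α u_k` on `V k`,
i.e. `xᵉ_k = (αI + εL_k)⁻¹ (α u_k)`.  Then the trajectory of points of interest is
open stable with the stated stability radius. -/
theorem open_proportional_dynamic_consensus_stability
    (ε α β : ℝ) (hε : 0 < ε) (hα0 : 0 < α) (hα : α < 1 / 2) (hβ : β > 1 - α)
    (V : ℕ → Finset ℤ) (hVne : ∀ k, (V k).Nonempty)
    (hVcard : ∀ k, ((V (k + 1)).card : ℝ) ≥ β ^ 2 * ((V k).card : ℝ))
    (N : ℕ → ℤ → Finset ℤ)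
    (hNsub : ∀ k v, N k v ⊆ V k)
    (hNsymm : ∀ k v w, w ∈ N k v ↔ v ∈ N k w)
    (hNirr : ∀ k v, v ∉ N k v)
    (hdeg : ∀ k, ∀ v ∈ V k, ((N k v).card : ℝ) ≤ 1 / (2 * ε))
    (u : ℕ → ℤ → ℝ) (lam2 : ℝ) (hlam2 : 0 ≤ lam2)
    (hconn : ∀ k, ∀ w : ℤ → ℝ, (∑ v ∈ V k, w v) = 0 →
      (∑ v ∈ V k, w v * (∑ z ∈ N k v, (w v - w z))) ≥ lam2 * ∑ v ∈ V k, (w v) ^ 2)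
    (Pi' U : ℝ)
    (hPi : ∀ k, ∀ v ∈ V k, |u k v - (∑ z ∈ V k, u k z) / ((V k).card : ℝ)| ≤ Pi')
    (hU : ∀ k, openDist (V (k + 1)) (V k)
        (fun _ => (∑ z ∈ V (k + 1), u (k + 1) z) / ((V (k + 1)).card : ℝ))
        (fun _ => (∑ z ∈ V k, u k z) / ((V k).card : ℝ)) ≤
      Real.sqrt ((V (k + 1)).card) * U)
    (x xe : ℕ → ℤ → ℝ)
    (hx_rem : ∀ k, ∀ v ∈ V k ∩ V (k + 1),
      x (k + 1) v =
        x k v - α * (x k v - u k v) - ε * ∑ w ∈ N k v, (x k v - x k w))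
    (hx_arr : ∀ k, ∀ v ∈ V (k + 1) \ V k, x (k + 1) v = u (k + 1) v)
    (hxe : ∀ k, ∀ v ∈ V k,
      α * xe k v + ε * (∑ w ∈ N k v, (xe k v - xe k w)) = α * u k v) :
    ∀ ε' > ((1 + 2 / (1 + (ε / α) * lam2) + (1 / β) * (1 / (1 + (ε / α) * lam2))) * Pi'
          + U) / (1 - (1 - α) / β),
      ∃ δ > 0, openDist (V 0) (V 0) (x 0) (xe 0) / Real.sqrt ((V 0).card) < δ →
        ∀ k, openDist (V k) (V k) (x k) (xe k) / Real.sqrt ((V k).card) < ε' :=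
  open_proportional_dynamic_consensus_stability_general ε α β hε hα0 hα hβ V hVne hVcard N hNsub
    hNsymm hdeg u lam2 hlam2 hconn Pi' U hPi hU x xe hx_rem hx_arr hxe
end
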